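/- arXiv:2008.02216 — 3 statements merged into one kernel-verified Lean document; each statement's English description precedes it below -/
import Mathlib

section
/- For a ranking r of n items and its reversal s, the area under the Jaccard curve AUC(r,s) = (1/(n−1))·((j_1 + j_n)/2 + Σ_{k=2}^{n−1} j_k), where j_k = J(r,s,k), equals (n² + 1)/(4n(n−1)) if n is odd, and n/(4(n−1)) if n is even. -/
open Finset Filter
open scoped Classical

noncomputable def rankOf {n : ℕ} (r : Fin n → ℝ) (i : Fin n) : ℕ :=
  (Finset.univ.filter (fun j => r i ≤ r j)).card

noncomputable def topk {n : ℕ} (r : Fin n → ℝ) (k : ℕ) : Finset (Fin n) :=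
  Finset.univ.filter (fun i => rankOf r i ≤ k)

noncomputable def jac {n : ℕ} (r s : Fin n → ℝ) (k : ℕ) : ℝ :=
  ((topk r k ∩ topk s k).card : ℝ) / ((topk r k ∪ topk s k).card : ℝ)

noncomputable def kthScore {n : ℕ} (r : Fin n → ℝ) (k : ℕ) : ℝ :=
  if h : (topk r k).Nonempty then (topk r k).inf' h r else 0

noncomputable def fmu {n : ℕ} (r : Fin n → ℝ) (k : ℕ) (i : Fin n) : ℝ :=
  if i ∈ topk r k then 1 else r i / kthScore r k

noncomputable def fuji {n : ℕ} (r s : Fin n → ℝ) (k : ℕ) : ℝ :=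
  (∑ x ∈ topk r k ∪ topk s k, min (fmu r k x) (fmu s k x)) /
  (∑ x ∈ topk r k ∪ topk s k, max (fmu r k x) (fmu s k x))

/-!
For an injective score `r`, `rankOf r` is a bijection onto `{1, …, n}`, and under reversal the
top-`k` sets of `r` and `s` are the rank windows `[1, k]` and `[n + 1 - k, n]` of `r`. They meet
in `(2k - n)₊` items (truncated subtraction in `ℕ`) and their union has `min (2k) n`, so
`j_k = (2k - n)₊ / n` for `k ≤ n`. The trapezoid sum then reduces to
`∑_{k=0}^{n} (2k - n)₊ = ⌊(n + 1)² / 4⌋`, whose remainder modulo 4 gives the parity split.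
-/

lemma rankOf_lt_rankOf_of_lt {n : ℕ} {r : Fin n → ℝ} {i j : Fin n} (h : r i < r j) :
    rankOf r j < rankOf r i := by
  refine card_lt_card ((ssubset_iff_of_subset fun a ha => ?_).2 ⟨i, ?_, ?_⟩)
  · simp only [mem_filter, mem_univ, true_and] at ha ⊢
    exact h.le.trans ha
  · simp
  · simpa using h

lemma rankOf_injective {n : ℕ} {r : Fin n → ℝ} (hr : Function.Injective r) :
    Function.Injective (rankOf r) := by
  intro i j h
  rcases lt_trichotomy (r i) (r j) with hlt | heq | hgt
  · exact absurd h (rankOf_lt_rankOf_of_lt hlt).ne'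
  · exact hr heq
  · exact absurd h (rankOf_lt_rankOf_of_lt hgt).ne

lemma rankOf_mem_Icc {n : ℕ} (r : Fin n → ℝ) (i : Fin n) : rankOf r i ∈ Icc 1 n :=
  mem_Icc.2 ⟨card_pos.2 ⟨i, by simp⟩, (card_filter_le _ _).trans_eq (card_fin n)⟩

lemma image_rankOf {n : ℕ} {r : Fin n → ℝ} (hr : Function.Injective r) :
    univ.image (rankOf r) = Icc 1 n :=
  eq_of_subset_of_card_le (image_subset_iff.2 fun i _ => rankOf_mem_Icc r i) <| by
    rw [card_image_of_injective _ (rankOf_injective hr)]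
    simp

lemma card_filter_rankOf {n : ℕ} {r : Fin n → ℝ} (hr : Function.Injective r)
    (p : ℕ → Prop) [DecidablePred p] :
    #(univ.filter fun i => p (rankOf r i)) = #((Icc 1 n).filter p) := by
  rw [← image_rankOf hr, filter_image, card_image_of_injective _ (rankOf_injective hr)]

lemma card_topk {n : ℕ} {r : Fin n → ℝ} (hr : Function.Injective r) {k : ℕ} (hk : k ≤ n) :
    #(topk r k) = k := by
  rw [topk, card_filter_rankOf hr (· ≤ k)]
  have : (Icc 1 n).filter (· ≤ k) = Icc 1 k := by ext; simp; omega
  simp [this]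

section Reversal

variable {n : ℕ} {r s : Fin n → ℝ} (hr : Function.Injective r)
  (hrev : ∀ x, rankOf s x = n + 1 - rankOf r x)
include hrev

lemma topk_of_rankOf_reverse (k : ℕ) :
    topk s k = univ.filter fun i => n + 1 - k ≤ rankOf r i := by
  ext i
  simp only [topk, mem_filter, mem_univ, true_and, hrev]
  omega

include hr

lemma card_topk_of_rankOf_reverse {k : ℕ} (hk : k ≤ n) : #(topk s k) = k := by
  rw [topk_of_rankOf_reverse hrev, card_filter_rankOf hr (n + 1 - k ≤ ·)]
  have : (Icc 1 n).filter (n + 1 - k ≤ ·) = Icc (n + 1 - k) n := by ext; simp; omega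
  rw [this, Nat.card_Icc]
  omega

lemma card_topk_inter_of_rankOf_reverse {k : ℕ} (hk : k ≤ n) :
    #(topk r k ∩ topk s k) = 2 * k - n := by
  rw [topk_of_rankOf_reverse hrev, topk, ← filter_and,
    card_filter_rankOf hr (fun a => a ≤ k ∧ n + 1 - k ≤ a)]
  have : (Icc 1 n).filter (fun a => a ≤ k ∧ n + 1 - k ≤ a) = Icc (n + 1 - k) k := by
    ext; simp; omega
  rw [this, Nat.card_Icc]
  omega

lemma jac_of_rankOf_reverse {k : ℕ} (hk : k ≤ n) :
    jac r s k = ((2 * k - n : ℕ) : ℝ) / (min (2 * k) n : ℕ) := by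
  have hunion := card_union_add_card_inter (topk r k) (topk s k)
  rw [card_topk hr hk, card_topk_of_rankOf_reverse hr hrev hk,
    card_topk_inter_of_rankOf_reverse hr hrev hk] at hunion
  rw [jac, card_topk_inter_of_rankOf_reverse hr hrev hk]
  congr 2
  omega

lemma jac_eq_div_of_rankOf_reverse {k : ℕ} (hk : k ≤ n) :
    jac r s k = ((2 * k - n : ℕ) : ℝ) / n := by
  rw [jac_of_rankOf_reverse hr hrev hk]
  rcases le_total (2 * k) n with h | h
  · simp [Nat.sub_eq_zero_of_le h]
  · rw [min_eq_right h]

end Reversal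

-- `if Odd n then 0 else 1` is `(n + 1) ^ 2 % 4`.
lemma four_mul_sum_range_two_mul_sub (n : ℕ) :
    4 * ∑ k ∈ range (n + 1), (2 * k - n) + (if Odd n then 0 else 1) = (n + 1) ^ 2 := by
  induction n using Nat.twoStepInduction with
  | zero => simp
  | one => simp [sum_range_succ]
  | more n ih _ =>
    have hshift : ∑ k ∈ range (n + 2), (2 * (k + 1) - (n + 2))
        = ∑ k ∈ range (n + 2), (2 * k - n) := sum_congr rfl fun k _ => by omega
    rw [sum_range_succ', hshift, sum_range_succ]
    simp only [show Odd (n + 2) ↔ Odd n by simp [parity_simps]]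
    rw [show 2 * (n + 1) - n = n + 2 by omega, show 2 * 0 - (n + 2) = 0 by omega]
    linarith

lemma sum_Icc_two_mul_sub_add {n : ℕ} (hn : 2 ≤ n) :
    ∑ k ∈ Icc 2 (n - 1), (2 * k - n) + n = ∑ k ∈ range (n + 1), (2 * k - n) := by
  have hIcc : Icc 2 (n - 1) = Ico 2 n := by ext; simp; omega
  rw [sum_range_succ, ← sum_range_add_sum_Ico _ hn, sum_range_succ, sum_range_one, hIcc]
  omega

theorem jaccard_reversal_auc_general {n : ℕ} (hn : 2 ≤ n) (r s : Fin n → ℝ)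
    (hr : Function.Injective r)
    (hrev : ∀ x, rankOf s x = n + 1 - rankOf r x) :
    (1 / ((n : ℝ) - 1)) *
        ((jac r s 1 + jac r s n) / 2 + ∑ k ∈ Finset.Icc 2 (n - 1), jac r s k) =
      if Odd n then ((n : ℝ) ^ 2 + 1) / (4 * n * (n - 1))
      else (n : ℝ) / (4 * (n - 1)) := by
  have hjac {k : ℕ} (hk : k ≤ n) : jac r s k = ((2 * k - n : ℕ) : ℝ) / n :=
    jac_eq_div_of_rankOf_reverse hr hrev hk
  obtain ⟨S, hS⟩ : ∃ S, ∑ k ∈ Icc 2 (n - 1), (2 * k - n) = S := ⟨_, rfl⟩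
  have hsum : ∑ k ∈ Icc 2 (n - 1), jac r s k = (S : ℝ) / n := by
    rw [← hS, Nat.cast_sum, sum_div]
    exact sum_congr rfl fun k hk => hjac ((mem_Icc.1 hk).2.trans (Nat.sub_le n 1))
  have hcount : 4 * ((S : ℝ) + n) + (if Odd n then 0 else 1) = (n + 1) ^ 2 := by
    have h := four_mul_sum_range_two_mul_sub n
    rw [← sum_Icc_two_mul_sub_add hn, hS] at h
    exact_mod_cast h
  rw [hjac (by omega), hjac le_rfl, Nat.sub_eq_zero_of_le (by omega),
    show 2 * n - n = n by omega, hsum]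
  have hn1 : (n : ℝ) - 1 ≠ 0 := sub_ne_zero.2 (by norm_cast; omega)
  have hn0 : (n : ℝ) ≠ 0 := by positivity
  split_ifs at hcount ⊢ <;> field_simp <;> linear_combination 2 * hcount

theorem jaccard_reversal_auc {n : ℕ} (hn : 2 ≤ n) (r s : Fin n → ℝ)
    (hr : Function.Injective r) (hs : Function.Injective s)
    (hrev : ∀ x, rankOf s x = n + 1 - rankOf r x) :
    (1 / ((n : ℝ) - 1)) *
        ((jac r s 1 + jac r s n) / 2 + ∑ k ∈ Finset.Icc 2 (n - 1), jac r s k) =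
      if Odd n then ((n : ℝ) ^ 2 + 1) / (4 * n * (n - 1))
      else (n : ℝ) / (4 * (n - 1)) :=
  jaccard_reversal_auc_general hn r s hr hrev
end

section
/- For every ε > 0 and every pair of permutations π, τ of {1,…,n}, there exist score vectors r and s inducing the item orderings π and τ respectively, such that |FUJI(r, s, k) − J(r, s, k)| ≤ ε for all cutoffs 1 ≤ k ≤ n. In particular, one may take geometrically decaying scores r_{π(i)} = α^{i−1} and s_{τ(i)} = α^{i−1} for α > 0 sufficiently small. -/
open Finset Filter
open scoped Classical

/-!
An item outside the top-`k` set of `r` scores strictly below every item inside it, so for nonnegative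
scores all membership degrees lie in `[0, 1]`, equal to `1` on the top-`k` set. Hence, over
`U = Top_k r ∪ Top_k s` and `I = Top_k r ∩ Top_k s`, the `max`-sum of FUJI is `#U`, the `min`-sum is
`#I + e` with `e` the `min`-sum over `U \ I`, and `FUJI - J = e / #U`. If each score is at most `δ`
times every larger score, each summand of `e` is at most `δ`, so `0 ≤ FUJI - J ≤ δ`. The scores
`α ^ (π⁻¹ i)` with `0 < α < 1` have this gap with `δ = α`.
-/

section Fuzzy

variable {n : ℕ} {r s : Fin n → ℝ} {k : ℕ}

theorem lt_of_notMem_topk_of_mem_topk {i j : Fin n} (hi : i ∉ topk r k) (hj : j ∈ topk r k) :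
    r i < r j := by
  simp only [topk, mem_filter, mem_univ, true_and] at hi hj
  by_contra! hji
  have hsub : univ.filter (fun l => r i ≤ r l) ⊆ univ.filter (fun l => r j ≤ r l) :=
    monotone_filter_right _ fun _ _ hl => hji.trans hl
  exact hi ((card_le_card hsub).trans hj)

theorem kthScore_nonneg (hr : ∀ i, 0 ≤ r i) : 0 ≤ kthScore r k := by
  unfold kthScore
  split_ifs with hne
  · exact le_inf' hne r fun i _ => hr i
  · exact le_rfl

theorem fmu_of_mem {i : Fin n} (hi : i ∈ topk r k) : fmu r k i = 1 :=
  if_pos hi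

theorem fmu_nonneg (hr : ∀ i, 0 ≤ r i) (i : Fin n) : 0 ≤ fmu r k i := by
  unfold fmu
  split_ifs
  · exact zero_le_one
  · exact div_nonneg (hr i) (kthScore_nonneg hr)

theorem fmu_le_of_notMem {δ : ℝ} (hr : ∀ i, 0 ≤ r i) (hδ : 0 ≤ δ)
    (hgap : ∀ i j, r i < r j → r i ≤ δ * r j) {i : Fin n} (hi : i ∉ topk r k) :
    fmu r k i ≤ δ := by
  rw [fmu, if_neg hi]
  rcases (topk r k).eq_empty_or_nonempty with hempty | hne
  · simp [kthScore, hempty, hδ]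
  · obtain ⟨j, hj, hkth⟩ := exists_mem_eq_inf' hne r
    have hlt := lt_of_notMem_topk_of_mem_topk hi hj
    rw [kthScore, dif_pos hne, hkth, div_le_iff₀ ((hr i).trans_lt hlt)]
    exact hgap i j hlt

theorem fmu_le_one (hr : ∀ i, 0 ≤ r i) (i : Fin n) : fmu r k i ≤ 1 := by
  by_cases hi : i ∈ topk r k
  · exact (fmu_of_mem hi).le
  · exact fmu_le_of_notMem hr zero_le_one (fun _ _ h => (one_mul (r _)).symm ▸ h.le) hi

theorem sum_max_fmu_eq_card (hr : ∀ i, 0 ≤ r i) (hs : ∀ i, 0 ≤ s i) :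
    ∑ x ∈ topk r k ∪ topk s k, max (fmu r k x) (fmu s k x) = #(topk r k ∪ topk s k) := by
  rw [← nsmul_one, ← sum_const]
  refine sum_congr rfl fun x hx => ?_
  rcases mem_union.1 hx with h | h
  · rw [fmu_of_mem h, max_eq_left (fmu_le_one hs x)]
  · rw [fmu_of_mem h, max_eq_right (fmu_le_one hr x)]

theorem sum_min_fmu_eq_card_add :
    ∑ x ∈ topk r k ∪ topk s k, min (fmu r k x) (fmu s k x) =
      #(topk r k ∩ topk s k) +
        ∑ x ∈ (topk r k ∪ topk s k) \ (topk r k ∩ topk s k), min (fmu r k x) (fmu s k x) := by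
  rw [← sum_sdiff inter_subset_union, add_comm, ← nsmul_one, ← sum_const]
  congr 1
  refine sum_congr rfl fun x hx => ?_
  rw [fmu_of_mem (mem_inter.1 hx).1, fmu_of_mem (mem_inter.1 hx).2, min_self]

theorem fuji_sub_jac_eq (hr : ∀ i, 0 ≤ r i) (hs : ∀ i, 0 ≤ s i) :
    fuji r s k - jac r s k =
      (∑ x ∈ (topk r k ∪ topk s k) \ (topk r k ∩ topk s k), min (fmu r k x) (fmu s k x)) /
        #(topk r k ∪ topk s k) := by
  rw [fuji, jac, sum_max_fmu_eq_card hr hs, sum_min_fmu_eq_card_add, add_div, add_sub_cancel_left]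

theorem abs_fuji_sub_jac_le {δ : ℝ} (hr : ∀ i, 0 ≤ r i) (hs : ∀ i, 0 ≤ s i) (hδ : 0 ≤ δ)
    (hδr : ∀ i ∉ topk r k, fmu r k i ≤ δ) (hδs : ∀ i ∉ topk s k, fmu s k i ≤ δ) :
    |fuji r s k - jac r s k| ≤ δ := by
  set U := topk r k ∪ topk s k
  set I := topk r k ∩ topk s k
  have hmin : ∀ x ∈ U \ I, min (fmu r k x) (fmu s k x) ≤ δ := fun x hx => by
    rcases not_and_or.1 (mem_inter.not.1 (mem_sdiff.1 hx).2) with h | h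
    · exact (min_le_left _ _).trans (hδr x h)
    · exact (min_le_right _ _).trans (hδs x h)
  have hsum : ∑ x ∈ U \ I, min (fmu r k x) (fmu s k x) ≤ δ * #U :=
    calc ∑ x ∈ U \ I, min (fmu r k x) (fmu s k x) ≤ #(U \ I) • δ := sum_le_card_nsmul _ _ _ hmin
      _ ≤ #U • δ := nsmul_le_nsmul_left hδ (card_le_card sdiff_subset)
      _ = δ * #U := by rw [nsmul_eq_mul, mul_comm]
  have hnonneg : 0 ≤ ∑ x ∈ U \ I, min (fmu r k x) (fmu s k x) :=
    sum_nonneg fun x _ => le_min (fmu_nonneg hr x) (fmu_nonneg hs x)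
  rw [fuji_sub_jac_eq hr hs, abs_of_nonneg (by positivity)]
  exact div_le_of_le_mul₀ (Nat.cast_nonneg _) hδ hsum

end Fuzzy

section Geometric

variable {n : ℕ} {α : ℝ}

def geomScore (α : ℝ) (π : Equiv.Perm (Fin n)) (i : Fin n) : ℝ :=
  α ^ (π.symm i : ℕ)

theorem geomScore_pos (hα : 0 < α) (π : Equiv.Perm (Fin n)) (i : Fin n) :
    0 < geomScore α π i :=
  pow_pos hα _

theorem geomScore_apply_lt_apply (hα₀ : 0 < α) (hα₁ : α < 1) (π : Equiv.Perm (Fin n))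
    {i j : Fin n} (hij : i < j) : geomScore α π (π j) < geomScore α π (π i) := by
  simp only [geomScore, Equiv.symm_apply_apply]
  exact pow_lt_pow_right_of_lt_one₀ hα₀ hα₁ hij

theorem pow_le_mul_pow_of_pow_lt (hα₀ : 0 < α) (hα₁ : α < 1) {a b : ℕ} (h : α ^ a < α ^ b) :
    α ^ a ≤ α * α ^ b := by
  rw [← pow_succ']
  exact pow_le_pow_of_le_one hα₀.le hα₁.le ((pow_lt_pow_iff_right_of_lt_one₀ hα₀ hα₁).1 h)

theorem fmu_geomScore_le (hα₀ : 0 < α) (hα₁ : α < 1) (π : Equiv.Perm (Fin n)) {k : ℕ}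
    {i : Fin n} (hi : i ∉ topk (geomScore α π) k) : fmu (geomScore α π) k i ≤ α :=
  fmu_le_of_notMem (fun j => (geomScore_pos hα₀ π j).le) hα₀.le
    (fun _ _ => pow_le_mul_pow_of_pow_lt hα₀ hα₁) hi

end Geometric

theorem fuji_close_to_jaccard {n : ℕ} (ε : ℝ) (hε : 0 < ε)
    (π τ : Equiv.Perm (Fin n)) :
    ∃ r s : Fin n → ℝ,
      (∀ i, 0 < r i) ∧ (∀ i, 0 < s i) ∧
      (∀ i j : Fin n, i < j → r (π j) < r (π i)) ∧
      (∀ i j : Fin n, i < j → s (τ j) < s (τ i)) ∧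
      ∀ k, 1 ≤ k → k ≤ n → |fuji r s k - jac r s k| ≤ ε := by
  set α := min ε (1 / 2)
  have hα₀ : 0 < α := lt_min hε one_half_pos
  have hα₁ : α < 1 := (min_le_right _ _).trans_lt one_half_lt_one
  refine ⟨geomScore α π, geomScore α τ, geomScore_pos hα₀ π, geomScore_pos hα₀ τ,
    fun _ _ => geomScore_apply_lt_apply hα₀ hα₁ π, fun _ _ => geomScore_apply_lt_apply hα₀ hα₁ τ,
    fun k _ _ => ?_⟩
  exact (abs_fuji_sub_jac_le (fun i => (geomScore_pos hα₀ π i).le)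
    (fun i => (geomScore_pos hα₀ τ i).le) hα₀.le (fun _ => fmu_geomScore_le hα₀ hα₁ π)
    (fun _ => fmu_geomScore_le hα₀ hα₁ τ)).trans (min_le_left _ _)
end

section
/- Transposition swap lemma for Jaccard: let s' be a ranking with rank_{s'}(x₁) = k₀ ≠ n where x₁ is the top item of r, let x_ℓ be the item with rank_{s'}(x_ℓ) = n, and let s be obtained from s' by swapping the ranks of x₁ and x_ℓ. Then for every k, J(r, s, k) ≤ J(r, s', k); moreover for k < k₀ the two Jaccard values are equal, while for k ≥ k₀ the union size does not decrease and the intersection size does not increase when passing from s' to s. -/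
open Finset Filter
open scoped Classical

/-! The swap changes the ranking `s'` only at `x₁` and `x_ℓ`, i.e. `rank_s = rank_{s'} ∘ (x₁ x_ℓ)`.
Below `k₀` and at `k = n` neither item moves across the cutoff `k`, so `Top_k` is unchanged. For
`k₀ ≤ k < n` the swap replaces `x₁` by `x_ℓ` in `Top_k(s')`; since `x₁ ∈ Top_k(r)` this removes a
common element and can only add a new one outside `Top_k(r)`, so the union does not shrink and the
intersection does not grow. -/

section Swap

variable {α : Type*} [DecidableEq α]

theorem Function.eq_comp_swap_of_apply {β : Type*} {f g : α → β} {a b : α}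
    (ha : g a = f b) (hb : g b = f a) (h : ∀ x, x ≠ a → x ≠ b → g x = f x) :
    g = f ∘ Equiv.swap a b := by
  funext x
  rcases eq_or_ne x a with rfl | hxa
  · simp [ha]
  rcases eq_or_ne x b with rfl | hxb
  · simp [hb]
  · simp [Equiv.swap_apply_of_ne_of_ne hxa hxb, h x hxa hxb]

variable [Fintype α] (p : α → Prop) [DecidablePred p] {a b : α}

theorem Finset.filter_comp_swap_of_iff (h : p a ↔ p b) :
    univ.filter (fun x => p (Equiv.swap a b x)) = univ.filter p := by
  ext x
  rcases eq_or_ne x a with rfl | hxa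
  · simpa using h.symm
  rcases eq_or_ne x b with rfl | hxb
  · simpa using h
  · simp [Equiv.swap_apply_of_ne_of_ne hxa hxb]

theorem Finset.filter_comp_swap_of_pos_of_neg (ha : p a) (hb : ¬ p b) :
    univ.filter (fun x => p (Equiv.swap a b x)) = insert b ((univ.filter p).erase a) := by
  have hab : a ≠ b := fun h => hb (h ▸ ha)
  ext x
  rcases eq_or_ne x a with rfl | hxa
  · simp [hb, hab]
  rcases eq_or_ne x b with rfl | hxb
  · simp [ha]
  · simp [Equiv.swap_apply_of_ne_of_ne hxa hxb, hxa, hxb]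

end Swap

section Exchange

variable {α : Type*} [DecidableEq α] {A B : Finset α} {a : α}

theorem Finset.card_union_le_card_union_insert_erase (ha : a ∈ A) (b : α) :
    #(A ∪ B) ≤ #(A ∪ insert b (B.erase a)) := by
  rw [union_insert, union_erase_of_mem ha]
  exact card_le_card (subset_insert b _)

theorem Finset.card_inter_insert_erase_le (ha : a ∈ A ∩ B) (b : α) :
    #(A ∩ insert b (B.erase a)) ≤ #(A ∩ B) := by
  have hsub : A ∩ insert b (B.erase a) ⊆ insert b ((A ∩ B).erase a) := by
    rw [← inter_erase]
    intro x hx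
    simp only [mem_inter, mem_insert] at hx ⊢
    tauto
  calc #(A ∩ insert b (B.erase a)) ≤ #((A ∩ B).erase a) + 1 :=
        (card_le_card hsub).trans (card_insert_le _ _)
    _ = #(A ∩ B) := card_erase_add_one ha

end Exchange

theorem rankOf_le {n : ℕ} (s : Fin n → ℝ) (i : Fin n) : rankOf s i ≤ n :=
  (card_filter_le _ _).trans_eq (card_fin n)

theorem jac_le_jac_of_card_le {n : ℕ} {r s s' : Fin n → ℝ} {k : ℕ}
    (hI : #(topk r k ∩ topk s k) ≤ #(topk r k ∩ topk s' k))
    (hU : #(topk r k ∪ topk s' k) ≤ #(topk r k ∪ topk s k)) :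
    jac r s k ≤ jac r s' k := by
  unfold jac
  rcases Nat.eq_zero_or_pos #(topk r k ∪ topk s' k) with hU' | hU'
  · -- both indices are then `0 / 0 = 0`
    have hI' : #(topk r k ∩ topk s k) = 0 :=
      Nat.eq_zero_of_le_zero (hI.trans (hU' ▸ card_le_card inter_subset_union))
    simp [hI', hU']
  · exact div_le_div₀ (by positivity) (by exact_mod_cast hI) (by exact_mod_cast hU')
      (by exact_mod_cast hU)

theorem jaccard_swap_lemma_general {n : ℕ} (r s s' : Fin n → ℝ)
    (x₁ xℓ : Fin n) (hx₁ : rankOf r x₁ = 1)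
    (k₀ : ℕ) (hk₀ : rankOf s' x₁ = k₀)
    (hxℓ : rankOf s' xℓ = n)
    (hswap₁ : rankOf s x₁ = n) (hswapℓ : rankOf s xℓ = k₀)
    (hother : ∀ x : Fin n, x ≠ x₁ → x ≠ xℓ → rankOf s x = rankOf s' x) :
    ∀ k, 1 ≤ k → k ≤ n →
      jac r s k ≤ jac r s' k ∧
      (k < k₀ → jac r s k = jac r s' k) ∧
      (k₀ ≤ k →
        (topk r k ∪ topk s' k).card ≤ (topk r k ∪ topk s k).card ∧
        (topk r k ∩ topk s k).card ≤ (topk r k ∩ topk s' k).card) := by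
  intro k hk1 hkn
  have hk₀n : k₀ ≤ n := hk₀ ▸ rankOf_le s' x₁
  have hrank : rankOf s = rankOf s' ∘ Equiv.swap x₁ xℓ :=
    Function.eq_comp_swap_of_apply (hswap₁.trans hxℓ.symm) (hswapℓ.trans hk₀.symm) hother
  have htop : topk s k = univ.filter (fun x => rankOf s' (Equiv.swap x₁ xℓ x) ≤ k) := by
    rw [topk, hrank]; rfl
  by_cases hk : k₀ ≤ k ∧ k < n
  · have hx₁r : x₁ ∈ topk r k := by simp [topk, hx₁, hk1]
    have hx₁s' : x₁ ∈ topk s' k := by simp [topk, hk₀, hk.1]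
    have hs : topk s k = insert xℓ ((topk s' k).erase x₁) :=
      htop.trans (filter_comp_swap_of_pos_of_neg (rankOf s' · ≤ k) (by omega) (by omega))
    have hU := card_union_le_card_union_insert_erase (B := topk s' k) hx₁r xℓ
    have hI := card_inter_insert_erase_le (mem_inter.2 ⟨hx₁r, hx₁s'⟩) xℓ
    rw [← hs] at hU hI
    exact ⟨jac_le_jac_of_card_le hI hU, by omega, fun _ => ⟨hU, hI⟩⟩
  · have hs : topk s k = topk s' k :=
      htop.trans (filter_comp_swap_of_iff (rankOf s' · ≤ k) (by omega))
    simp [jac, hs]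

theorem jaccard_swap_lemma {n : ℕ} (r s s' : Fin n → ℝ)
    (hr : Function.Injective r) (hs : Function.Injective s)
    (hs' : Function.Injective s')
    (hrid : ∀ i : Fin n, rankOf r i = i.val + 1)
    (x₁ xℓ : Fin n) (hx₁ : rankOf r x₁ = 1)
    (k₀ : ℕ) (hk₀ : rankOf s' x₁ = k₀) (hk₀n : k₀ ≠ n)
    (hxℓ : rankOf s' xℓ = n)
    (hswap₁ : rankOf s x₁ = n) (hswapℓ : rankOf s xℓ = k₀)
    (hother : ∀ x : Fin n, x ≠ x₁ → x ≠ xℓ → rankOf s x = rankOf s' x) :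
    ∀ k, 1 ≤ k → k ≤ n →
      jac r s k ≤ jac r s' k ∧
      (k < k₀ → jac r s k = jac r s' k) ∧
      (k₀ ≤ k →
        (topk r k ∪ topk s' k).card ≤ (topk r k ∪ topk s k).card ∧
        (topk r k ∩ topk s k).card ≤ (topk r k ∩ topk s' k).card) :=
  jaccard_swap_lemma_general r s s' x₁ xℓ hx₁ k₀ hk₀ hxℓ hswap₁ hswapℓ hother
end
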